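/- Let Y be a two-dimensional linear subspace of C_p(Z) that has property-SNP in C_p(Z) with respect to 𝒫. Then no nonzero element of Y attains its supremum at more than two points; that is, for every nonzero f ∈ Y, there do not exist three pairwise distinct points x₁, x₂, x₃ ∈ Z such that |f(y)| ≤ |f(xᵢ)| for all y ∈ Z and i = 1, 2, 3. -/

import Mathlib

open scoped ENNReal

noncomputable section

/-- The space `C_p(Z)` of continuous real-valued functions on `Z`, as a submodule of
`Z → ℝ`; its subspace topology is the topology of pointwise convergence. -/
def Cp (Z : Type*) [TopologicalSpace Z] : Submodule ℝ (Z → ℝ) where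
  carrier := {f | Continuous f}
  add_mem' hf hg := hf.add hg
  zero_mem' := continuous_const
  smul_mem' c f hf := hf.const_smul c

/-- The generating seminorm `ρ_F(f) = max_{x ∈ F} |f x|` of the topology of
pointwise convergence, for a finite `F ⊆ Z`. -/
def rhoP {Z : Type*} [TopologicalSpace Z] (F : Finset Z) (f : Cp Z) : ℝ :=
  ⨆ x ∈ F, |(f : Z → ℝ) x|

/-- `χ_ρ(g) = sup { |g v| : ρ v ≤ 1 } ∈ [0,∞]`. -/
def chi {V : Type*} [AddCommGroup V] [Module ℝ V] [TopologicalSpace V]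
    (ρ : V → ℝ) (g : V →L[ℝ] ℝ) : ℝ≥0∞ :=
  ⨆ v ∈ {v : V | ρ v ≤ 1}, ENNReal.ofReal |g v|

/-- `χ_ρ^W(f)` for a functional `f` on a subspace `W`. -/
def chiSub {V : Type*} [AddCommGroup V] [Module ℝ V] [TopologicalSpace V]
    (W : Submodule ℝ V) (ρ : V → ℝ) (f : W →L[ℝ] ℝ) : ℝ≥0∞ :=
  chi (fun w : W => ρ (w : V)) f

/-- `ft` is a Hahn-Banach extension of the pair `(f, ρ)` on the subspace `W`. -/
def IsHBE {V : Type*} [AddCommGroup V] [Module ℝ V] [TopologicalSpace V]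
    (W : Submodule ℝ V) (ρ : V → ℝ) (f : W →L[ℝ] ℝ) (ft : V →L[ℝ] ℝ) : Prop :=
  ft.comp W.subtypeL = f ∧ chi ρ ft = chiSub W ρ f

/-- Property-SNP of a subspace `W` with respect to the family `p` of seminorms. -/
def SNP {V : Type*} [AddCommGroup V] [Module ℝ V] [TopologicalSpace V]
    {ι : Type*} (p : ι → V → ℝ) (W : Submodule ℝ V) : Prop :=
  ∀ f : W →L[ℝ] ℝ, ∃ i, chiSub W (p i) f < ⊤ ∧ ∃ ft : V →L[ℝ] ℝ,
    ∀ j, (∀ v, p i v ≤ p j v) →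
      IsHBE W (p j) f ft ∧ ∀ g : V →L[ℝ] ℝ, IsHBE W (p j) f g → g = ft

namespace Stmt19Aux

variable {Z : Type*} [TopologicalSpace Z]

lemma rhoP_nonneg (F : Finset Z) (f : Cp Z) : 0 ≤ rhoP F f :=
  Real.iSup_nonneg fun _ => Real.iSup_nonneg fun _ => abs_nonneg _

lemma rhoP_le {F : Finset Z} {f : Cp Z} {c : ℝ} (hc : 0 ≤ c)
    (h : ∀ x ∈ F, |(f : Z → ℝ) x| ≤ c) : rhoP F f ≤ c :=
  Real.iSup_le (fun x => Real.iSup_le (fun hx => h x hx) hc) hc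

lemma le_rhoP {F : Finset Z} {f : Cp Z} {x : Z} (hx : x ∈ F) :
    |(f : Z → ℝ) x| ≤ rhoP F f := by
  have hb : BddAbove (Set.range fun y : Z => ⨆ _ : y ∈ F, |(f : Z → ℝ) y|) := by
    apply Set.Finite.bddAbove
    apply Set.Finite.subset
      (Set.Finite.insert 0 ((F.finite_toSet).image fun y => |(f : Z → ℝ) y|))
    rintro _ ⟨y, rfl⟩
    by_cases hy : y ∈ F
    · exact Set.mem_insert_iff.mpr (Or.inr ⟨y, hy, (ciSup_pos (f := fun _ : y ∈ F => |(f : Z → ℝ) y|) hy).symm⟩)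
    · refine Set.mem_insert_iff.mpr (Or.inl ?_)
      show (⨆ _ : y ∈ F, |(f : Z → ℝ) y|) = 0
      haveI : IsEmpty (y ∈ F) := isEmpty_Prop.mpr hy
      exact Real.iSup_of_isEmpty _
  calc |(f : Z → ℝ) x| = ⨆ _ : x ∈ F, |(f : Z → ℝ) x| := (ciSup_pos (f := fun _ : x ∈ F => |(f : Z → ℝ) x|) hx).symm
    _ ≤ rhoP F f := le_ciSup hb x

/-- Evaluation at a point as a continuous linear functional on `Cp Z`. -/
def ev (x : Z) : Cp Z →L[ℝ] ℝ where
  toLinearMap := (LinearMap.proj x).comp (Cp Z).subtype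
  cont := (continuous_apply x).comp continuous_subtype_val

@[simp] lemma ev_apply (x : Z) (f : Cp Z) : ev x f = (f : Z → ℝ) x := rfl

lemma chi_eq_one {V : Type*} [AddCommGroup V] [Module ℝ V] [TopologicalSpace V]
    {ρ : V → ℝ} {g : V →L[ℝ] ℝ}
    (h1 : ∀ v, ρ v ≤ 1 → |g v| ≤ 1) (h2 : ∃ v, ρ v ≤ 1 ∧ g v = 1) :
    chi ρ g = 1 := by
  unfold chi
  apply le_antisymm
  · exact iSup₂_le fun v hv => by
      simpa using ENNReal.ofReal_le_one.mpr (h1 v hv)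
  · obtain ⟨v, hv, hgv⟩ := h2
    have h : (1 : ℝ≥0∞) = ENNReal.ofReal |g v| := by rw [hgv]; simp
    rw [h]
    exact le_iSup₂ (f := fun v (_ : v ∈ {v : V | ρ v ≤ 1}) => ENNReal.ofReal |g v|) v hv

end Stmt19Aux

set_option maxHeartbeats 4000000 in
set_option synthInstance.maxHeartbeats 1000000 in
open Stmt19Aux in
theorem statement19 {Z : Type*} [TopologicalSpace Z] [Nonempty Z] [T35Space Z]
    (Y : Submodule ℝ (Cp Z)) (hdim : Module.finrank ℝ Y = 2)
    (hsnp : SNP (fun F : Finset Z => rhoP F) Y) :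
    ∀ f : Cp Z, f ∈ Y → f ≠ 0 →
      ¬ ∃ x₁ x₂ x₃ : Z, x₁ ≠ x₂ ∧ x₁ ≠ x₃ ∧ x₂ ≠ x₃ ∧
        (∀ y : Z, |(f : Z → ℝ) y| ≤ |(f : Z → ℝ) x₁|) ∧
        (∀ y : Z, |(f : Z → ℝ) y| ≤ |(f : Z → ℝ) x₂|) ∧
        (∀ y : Z, |(f : Z → ℝ) y| ≤ |(f : Z → ℝ) x₃|) := by
  classical
  intro f hfY hf0
  rintro ⟨x₁, x₂, x₃, h12, h13, h23, hm1, hm2, hm3⟩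
  set M : ℝ := |(f : Z → ℝ) x₁| with hMdef
  have hfz : ∃ z, (f : Z → ℝ) z ≠ 0 := by
    by_contra h
    push_neg at h
    exact hf0 (Subtype.ext (funext h))
  obtain ⟨z, hz⟩ := hfz
  have hM : 0 < M := lt_of_lt_of_le (abs_pos.mpr hz) (hm1 z)
  have habs : ∀ y, |(f : Z → ℝ) y| ≤ M := hm1
  have hM1 : |(f : Z → ℝ) x₁| = M := rfl
  have hM2 : |(f : Z → ℝ) x₂| = M := le_antisymm (hm1 x₂) (hm2 x₁)
  have hM3 : |(f : Z → ℝ) x₃| = M := le_antisymm (hm1 x₃) (hm3 x₁)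
  have hε : ∀ x : Z, |(f : Z → ℝ) x| = M →
      |(f : Z → ℝ) x / M| = 1 ∧ ((f : Z → ℝ) x / M) * (f : Z → ℝ) x = M := by
    intro x hx
    constructor
    · rw [abs_div, hx, abs_of_pos hM, div_self hM.ne']
    · rw [div_mul_eq_mul_div, ← sq, ← sq_abs, hx, sq, mul_div_assoc,
        div_self hM.ne', mul_one]
  obtain ⟨hε₁, hε₁M⟩ := hε x₁ hM1
  obtain ⟨hε₂, hε₂M⟩ := hε x₂ hM2
  obtain ⟨hε₃, hε₃M⟩ := hε x₃ hM3
  set ε₁ : ℝ := (f : Z → ℝ) x₁ / M with hε₁def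
  set ε₂ : ℝ := (f : Z → ℝ) x₂ / M with hε₂def
  set ε₃ : ℝ := (f : Z → ℝ) x₃ / M with hε₃def
  haveI : Module.Free ℝ (↥Y) := Module.Free.of_divisionRing ℝ ↥Y
  haveI instFD : FiniteDimensional ℝ Y := Module.finite_of_finrank_eq_succ hdim
  haveI : Module.Projective ℝ (↥Y) := Module.Projective.of_free
  haveI : FiniteDimensional ℝ (Module.Dual ℝ ↥Y) :=
    Subspace.instModuleDualFiniteDimensional (K := ℝ) (V := ↥Y)
  set f₀ : Y := ⟨f, hfY⟩ with hf₀def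
  -- linear functionals on Y given by scaled evaluations
  let L : Z → ℝ → Module.Dual ℝ Y := fun x e =>
    e • ((LinearMap.proj x).comp ((Cp Z).subtype.comp Y.subtype))
  have hLapp : ∀ (x : Z) (e : ℝ) (w : Y),
      L x e w = e * ((w : Cp Z) : Z → ℝ) x := fun _ _ _ => rfl
  set d₁ : Module.Dual ℝ Y := L x₁ ε₁ - L x₃ ε₃ with hd₁def
  set d₂ : Module.Dual ℝ Y := L x₂ ε₂ - L x₃ ε₃ with hd₂def
  -- evaluation at f₀ on the dual
  set eF : Module.Dual ℝ (Module.Dual ℝ Y) := Module.Dual.eval ℝ Y f₀ with heF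
  have heFapp : ∀ φ : Module.Dual ℝ Y, eF φ = φ f₀ := fun _ => rfl
  have hf₀ne : f₀ ≠ 0 := fun h => hf0 (congrArg Subtype.val h)
  have hexφ : ∃ φ : Module.Dual ℝ Y, φ f₀ ≠ 0 := by
    by_contra h
    push_neg at h
    exact hf₀ne ((Module.forall_dual_apply_eq_zero_iff ℝ f₀).mp h)
  obtain ⟨φ₀, hφ₀⟩ := hexφ
  have hsurj : Function.Surjective eF := by
    intro rr
    refine ⟨(rr / φ₀ f₀) • φ₀, ?_⟩
    rw [heFapp]
    simp [div_mul_cancel₀, hφ₀]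
  have hdual2 : Module.finrank ℝ (Module.Dual ℝ ↥Y) = 2 :=
    (Subspace.dual_finrank_eq (K := ℝ) (V := ↥Y)).trans hdim
  have hker : Module.finrank ℝ (LinearMap.ker eF) ≤ 1 := by
    have hrn := LinearMap.finrank_range_add_finrank_ker eF
    rw [LinearMap.range_eq_top.mpr hsurj, finrank_top, Module.finrank_self] at hrn
    have h2 : 1 + Module.finrank ℝ (LinearMap.ker eF) = 2 := hrn.trans hdual2
    omega
  haveI : Module.Finite ℝ ↥(LinearMap.ker eF) :=
    FiniteDimensional.finiteDimensional_submodule (LinearMap.ker eF)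
  haveI : Module.Free ℝ ↥(LinearMap.ker eF) :=
    Module.Free.of_divisionRing ℝ ↥(LinearMap.ker eF)
  obtain ⟨v₀, hv₀⟩ := (finrank_le_one_iff (K := ℝ) (V := ↥(LinearMap.ker eF))).mp hker
  have hd₁mem : d₁ ∈ LinearMap.ker eF := by
    rw [LinearMap.mem_ker, heFapp, hd₁def, LinearMap.sub_apply, hLapp, hLapp]
    show ε₁ * (f : Z → ℝ) x₁ - ε₃ * (f : Z → ℝ) x₃ = 0
    rw [hε₁def, hε₃def, hε₁M, hε₃M, sub_self]
  have hd₂mem : d₂ ∈ LinearMap.ker eF := by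
    rw [LinearMap.mem_ker, heFapp, hd₂def, LinearMap.sub_apply, hLapp, hLapp]
    show ε₂ * (f : Z → ℝ) x₂ - ε₃ * (f : Z → ℝ) x₃ = 0
    rw [hε₂def, hε₃def, hε₂M, hε₃M, sub_self]
  obtain ⟨c₁, hc₁⟩ := hv₀ ⟨d₁, hd₁mem⟩
  obtain ⟨c₂, hc₂⟩ := hv₀ ⟨d₂, hd₂mem⟩
  have hc₁' : d₁ = c₁ • (v₀ : Module.Dual ℝ Y) := by
    have := congrArg (Subtype.val) hc₁
    simpa using this.symm
  have hc₂' : d₂ = c₂ • (v₀ : Module.Dual ℝ Y) := by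
    have := congrArg (Subtype.val) hc₂
    simpa using this.symm
  have hprop : c₂ • d₁ = c₁ • d₂ := by
    rw [hc₁', hc₂', smul_smul, smul_smul, mul_comm]
  -- the key combinatorial claim
  have key : ∃ (p q r : Z) (a b c t : ℝ),
      q ≠ p ∧ r ≠ p ∧ |a| = 1 ∧ |b| = 1 ∧ |c| = 1 ∧
      a * (f : Z → ℝ) p = M ∧ b * (f : Z → ℝ) q = M ∧ c * (f : Z → ℝ) r = M ∧
      0 ≤ t ∧ t ≤ 1 ∧
      ∀ w : Y, a * ((w : Cp Z) : Z → ℝ) p =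
        t * (b * ((w : Cp Z) : Z → ℝ) q) +
          (1 - t) * (c * ((w : Cp Z) : Z → ℝ) r) := by
    have hMε₁ : ε₁ * (f : Z → ℝ) x₁ = M := hε₁M
    have hMε₂ : ε₂ * (f : Z → ℝ) x₂ = M := hε₂M
    have hMε₃ : ε₃ * (f : Z → ℝ) x₃ = M := hε₃M
    by_cases hc₂0 : c₂ = 0
    · by_cases hc₁0 : c₁ = 0
      · -- d₁ = 0 : ψ₁ = ψ₃
        have hz₁ : ∀ w : Y, ε₁ * ((w : Cp Z) : Z → ℝ) x₁ = ε₃ * ((w : Cp Z) : Z → ℝ) x₃ := by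
          intro w
          have := LinearMap.congr_fun (hc₁'.trans (by rw [hc₁0, zero_smul])) w
          rw [hd₁def, LinearMap.sub_apply, hLapp, hLapp, LinearMap.zero_apply] at this
          linarith
        exact ⟨x₁, x₂, x₃, ε₁, ε₂, ε₃, 0, h12.symm, h13.symm, hε₁, hε₂, hε₃,
          hMε₁, hMε₂, hMε₃, le_refl 0, zero_le_one,
          fun w => by rw [hz₁ w]; ring⟩
      · -- d₂ = 0 : ψ₂ = ψ₃
        have hz₂ : ∀ w : Y, ε₂ * ((w : Cp Z) : Z → ℝ) x₂ = ε₃ * ((w : Cp Z) : Z → ℝ) x₃ := by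
          intro w
          have := LinearMap.congr_fun (hc₂'.trans (by rw [hc₂0, zero_smul])) w
          rw [hd₂def, LinearMap.sub_apply, hLapp, hLapp, LinearMap.zero_apply] at this
          linarith
        exact ⟨x₂, x₁, x₃, ε₂, ε₁, ε₃, 0, h12, h23.symm, hε₂, hε₁, hε₃,
          hMε₂, hMε₁, hMε₃, le_refl 0, zero_le_one,
          fun w => by rw [hz₂ w]; ring⟩
    · -- d₁ = s • d₂ with s = c₁ / c₂
      set s : ℝ := c₁ / c₂ with hsdef
      have hds : ∀ w : Y,
          ε₁ * ((w : Cp Z) : Z → ℝ) x₁ - ε₃ * ((w : Cp Z) : Z → ℝ) x₃ =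
            s * (ε₂ * ((w : Cp Z) : Z → ℝ) x₂ - ε₃ * ((w : Cp Z) : Z → ℝ) x₃) := by
        intro w
        have h1 := LinearMap.congr_fun hc₁' w
        have h2 := LinearMap.congr_fun hc₂' w
        rw [hd₁def, LinearMap.sub_apply, hLapp, hLapp, LinearMap.smul_apply,
          smul_eq_mul] at h1
        rw [hd₂def, LinearMap.sub_apply, hLapp, hLapp, LinearMap.smul_apply,
          smul_eq_mul] at h2
        rw [h1, h2, hsdef]
        field_simp
      rcases le_or_gt s 0 with hs0 | hs0
      · -- s ≤ 0 : ψ₃ is a convex combination of ψ₂ and ψ₁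
        have h1s : (0:ℝ) < 1 - s := by linarith
        refine ⟨x₃, x₂, x₁, ε₃, ε₂, ε₁, -s / (1 - s), h23, h13,
          hε₃, hε₂, hε₁, hMε₃, hMε₂, hMε₁, ?_, ?_, ?_⟩
        · exact div_nonneg (by linarith) h1s.le
        · rw [div_le_one h1s]; linarith
        · intro w
          have hw := hds w
          have h1 : (1:ℝ) - (-s / (1 - s)) = 1 / (1 - s) := by
            field_simp
            ring
          rw [h1]
          have hinv : (1 - s) * (1 - s)⁻¹ = 1 := mul_inv_cancel₀ h1s.ne'
          linear_combination (-(1 / (1 - s))) * hw - (ε₃ * ((w : Cp Z) : Z → ℝ) x₃) * hinv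
      · rcases le_or_gt s 1 with hs1 | hs1
        · -- 0 < s ≤ 1 : ψ₁ = s ψ₂ + (1-s) ψ₃
          refine ⟨x₁, x₂, x₃, ε₁, ε₂, ε₃, s, h12.symm, h13.symm,
            hε₁, hε₂, hε₃, hMε₁, hMε₂, hMε₃, hs0.le, hs1, ?_⟩
          intro w
          have hw := hds w
          ring_nf
          ring_nf at hw
          linarith
        · -- s > 1 : ψ₂ = (1/s) ψ₁ + (1 - 1/s) ψ₃
          have hsne : s ≠ 0 := by linarith
          refine ⟨x₂, x₁, x₃, ε₂, ε₁, ε₃, 1 / s, h12, h23.symm,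
            hε₂, hε₁, hε₃, hMε₂, hMε₁, hMε₃, by positivity, ?_, ?_⟩
          · rw [div_le_one (by linarith)]; linarith
          · intro w
            have hw := hds w
            field_simp
            linarith [hw]
  obtain ⟨p, q, r, a, b, c, t, hqp, hrp, ha1, hb1, hc1, hpa, hqb, hrc, ht0, ht1, hcomb⟩ := key
  -- the functional on Y and the two distinct extensions
  set ψ : Y →L[ℝ] ℝ := (a • ev p).comp Y.subtypeL with hψdef
  have hψapp : ∀ w : Y, ψ w = a * ((w : Cp Z) : Z → ℝ) p := fun _ => rfl
  obtain ⟨F₀, -, ft, hft⟩ := hsnp ψ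
  set F : Finset Z := F₀ ∪ {p, q, r} with hFdef
  have hmono : ∀ v, rhoP F₀ v ≤ rhoP F v := fun v =>
    rhoP_le (rhoP_nonneg F v) (fun x hx => le_rhoP (Finset.mem_union_left _ hx))
  obtain ⟨-, huniq⟩ := hft F hmono
  have hpF : p ∈ F := Finset.mem_union_right _ (by simp)
  have hqF : q ∈ F := Finset.mem_union_right _ (by simp)
  have hrF : r ∈ F := Finset.mem_union_right _ (by simp)
  set g₁ : Cp Z →L[ℝ] ℝ := a • ev p with hg₁def
  set g₂ : Cp Z →L[ℝ] ℝ := (t * b) • ev q + ((1 - t) * c) • ev r with hg₂def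
  have hg₁v : ∀ v : Cp Z, g₁ v = a * (v : Z → ℝ) p := fun _ => rfl
  have hg₂v : ∀ v : Cp Z,
      g₂ v = t * (b * (v : Z → ℝ) q) + (1 - t) * (c * (v : Z → ℝ) r) := by
    intro v
    show (t * b) * (v : Z → ℝ) q + ((1 - t) * c) * (v : Z → ℝ) r = _
    ring
  -- the normalized witness
  set vv : Cp Z := M⁻¹ • f with hvvdef
  have hvvapp : ∀ y : Z, (vv : Z → ℝ) y = M⁻¹ * (f : Z → ℝ) y := fun _ => rfl
  have hvvρ : rhoP F vv ≤ 1 := by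
    refine rhoP_le zero_le_one (fun y _ => ?_)
    rw [hvvapp, abs_mul, abs_inv, abs_of_pos hM]
    have h := mul_le_mul_of_nonneg_left (habs y) (inv_pos.mpr hM).le
    simpa [inv_mul_cancel₀ hM.ne'] using h
  have hone : ∀ (x : Z) (e : ℝ), e * (f : Z → ℝ) x = M → e * (vv : Z → ℝ) x = 1 := by
    intro x e hx
    rw [hvvapp]
    have h : e * (M⁻¹ * (f : Z → ℝ) x) = M⁻¹ * (e * (f : Z → ℝ) x) := by ring
    rw [h, hx, inv_mul_cancel₀ hM.ne']
  -- chi computations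
  have hchi1 : chi (rhoP F) g₁ = 1 := by
    refine chi_eq_one (fun v hv => ?_) ⟨vv, hvvρ, ?_⟩
    · rw [hg₁v, abs_mul, ha1, one_mul]
      exact le_trans (le_rhoP hpF) hv
    · rw [hg₁v]
      exact hone p a hpa
  have hchi2 : chi (rhoP F) g₂ = 1 := by
    refine chi_eq_one (fun v hv => ?_) ⟨vv, hvvρ, ?_⟩
    · rw [hg₂v]
      have h1 : |(v : Z → ℝ) q| ≤ 1 := le_trans (le_rhoP hqF) hv
      have h2 : |(v : Z → ℝ) r| ≤ 1 := le_trans (le_rhoP hrF) hv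
      have habs2 := abs_add_le (t * (b * (v : Z → ℝ) q)) ((1 - t) * (c * (v : Z → ℝ) r))
      rw [abs_mul, abs_mul, abs_mul, abs_mul, hb1, hc1, one_mul, one_mul,
        abs_of_nonneg ht0, abs_of_nonneg (by linarith : (0:ℝ) ≤ 1 - t)] at habs2
      nlinarith [h1, h2]
    · rw [hg₂v, hone q b hqb, hone r c hrc]
      ring
  have hchiSub : chiSub Y (rhoP F) ψ = 1 := by
    refine chi_eq_one (fun w hw => ?_) ?_
    · rw [hψapp, abs_mul, ha1, one_mul]
      exact le_trans (le_rhoP hpF) hw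
    · refine ⟨⟨vv, Y.smul_mem _ hfY⟩, ?_, ?_⟩
      · exact hvvρ
      · rw [hψapp]
        exact hone p a hpa
  have hHBE₁ : IsHBE Y (rhoP F) ψ g₁ := ⟨rfl, by rw [hchi1, hchiSub]⟩
  have hcomp₂ : g₂.comp Y.subtypeL = ψ := by
    ext w
    show g₂ (w : Cp Z) = ψ w
    rw [hg₂v, hψapp]
    exact (hcomb w).symm
  have hHBE₂ : IsHBE Y (rhoP F) ψ g₂ := ⟨hcomp₂, by rw [hchi2, hchiSub]⟩
  have hg : g₁ = g₂ := (huniq g₁ hHBE₁).trans (huniq g₂ hHBE₂).symm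
  -- produce a bump function separating p from {q, r}
  have hclosed : IsClosed ({q, r} : Set Z) := (Set.toFinite ({q, r} : Set Z)).isClosed
  have hpnot : p ∉ ({q, r} : Set Z) := by
    rintro (h | h)
    · exact hqp h.symm
    · exact hrp (by simpa using h.symm)
  obtain ⟨u, hu_cont, hup, huK⟩ :=
    CompletelyRegularSpace.completely_regular p _ hclosed hpnot
  have hcont : Continuous fun y : Z => 1 - (u y : ℝ) :=
    continuous_const.sub (continuous_subtype_val.comp hu_cont)
  set h₀ : Cp Z := ⟨fun y => 1 - (u y : ℝ), hcont⟩ with hh₀def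
  have hh₀p : (h₀ : Z → ℝ) p = 1 := by
    show 1 - (u p : ℝ) = 1
    rw [hup]
    simp
  have hh₀q : (h₀ : Z → ℝ) q = 0 := by
    show 1 - (u q : ℝ) = 0
    have : u q = 1 := huK (by simp)
    rw [this]
    simp
  have hh₀r : (h₀ : Z → ℝ) r = 0 := by
    show 1 - (u r : ℝ) = 0
    have : u r = 1 := huK (by simp)
    rw [this]
    simp
  have ha0 : a = 0 := by
    have h1 : g₁ h₀ = a := by rw [hg₁v, hh₀p, mul_one]
    have h2 : g₂ h₀ = 0 := by rw [hg₂v, hh₀q, hh₀r]; ring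
    rw [← h1, hg, h2]
  rw [ha0] at ha1
  norm_num at ha1
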